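/- Let α ∈ (0, 1/2] and τ ∈ (0, π/2). Then Û'(τ)·Ŵ(τ) - Û(τ)·Ŵ'(τ) > 0, V̂'(τ)·Ŵ(τ) - V̂(τ)·Ŵ'(τ) > 0, and (V̂'(τ)+Ŵ'(τ))·Û(τ) - (V̂(τ)+Ŵ(τ))·Û'(τ) < 0, where Û', V̂', Ŵ' denote the derivatives of Û, V̂, Ŵ. -/
import Mathlib


open Real

set_option maxHeartbeats 2000000

/-- Û(τ) = (1/α)(2 sin(2(1-α)τ) - 2(1-α) sin(2τ)) -/
noncomputable def Uhat (α τ : ℝ) : ℝ :=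
  (1/α) * (2 * Real.sin (2*(1 - α)*τ) - 2*(1 - α) * Real.sin (2*τ))

/-- V̂(τ) = (1/α)((1+α) sin((1-α)τ) - (1-α) sin((1+α)τ)) -/
noncomputable def Vhat (α τ : ℝ) : ℝ :=
  (1/α) * ((1 + α) * Real.sin ((1 - α)*τ) - (1 - α) * Real.sin ((1 + α)*τ))

/-- Ŵ(τ) = (1/α)((3-α) sin((1-α)τ) - (1-α) sin((3-α)τ)) -/
noncomputable def What (α τ : ℝ) : ℝ :=
  (1/α) * ((3 - α) * Real.sin ((1 - α)*τ) - (1 - α) * Real.sin ((3 - α)*τ))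

/-! ### Auxiliary lemmas -/

/-- Concavity of `sin` on `[0, π]`: `l * sin x ≤ sin (l * x)`. -/
lemma aux_sin_mul_le {l x : ℝ} (hl0 : 0 ≤ l) (hl1 : l ≤ 1) (hx0 : 0 ≤ x) (hxpi : x ≤ π) :
    l * Real.sin x ≤ Real.sin (l * x) := by
  have h := strictConcaveOn_sin_Icc.concaveOn.2 (x := x) (y := 0)
    ⟨hx0, hxpi⟩ ⟨le_rfl, Real.pi_pos.le⟩ hl0 (by linarith : (0:ℝ) ≤ 1 - l) (by ring)
  simpa using h

/-- Strict version for `0 < l < 1`, `0 < x ≤ π`. -/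
lemma aux_sin_mul_lt {l x : ℝ} (hl0 : 0 < l) (hl1 : l < 1) (hx0 : 0 < x) (hxpi : x ≤ π) :
    l * Real.sin x < Real.sin (l * x) := by
  have h := strictConcaveOn_sin_Icc.2 (x := x) (y := 0)
    ⟨hx0.le, hxpi⟩ ⟨le_rfl, Real.pi_pos.le⟩ (by exact_mod_cast hx0.ne')
    hl0 (by linarith : (0:ℝ) < 1 - l) (by ring)
  simpa using h

/-- `τ cos τ < sin τ` on `(0, π/2)`. -/
lemma aux_tau_cos_lt_sin {τ : ℝ} (hτ0 : 0 < τ) (hτ2 : τ < π/2) :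
    τ * Real.cos τ < Real.sin τ := by
  have hc : 0 < Real.cos τ := Real.cos_pos_of_mem_Ioo ⟨by linarith, hτ2⟩
  have h := Real.lt_tan hτ0 hτ2
  rw [Real.tan_eq_sin_div_cos, lt_div_iff₀ hc] at h
  exact h

/-- Monotonicity of `tan x / x`: for `0 < u ≤ τ < π/2`,
`τ cos τ sin u ≤ u sin τ cos u`. -/
lemma aux_tan_mono {u τ : ℝ} (hu0 : 0 < u) (huτ : u ≤ τ) (hτ2 : τ < π/2) :
    τ * Real.cos τ * Real.sin u ≤ u * Real.sin τ * Real.cos u := by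
  have hpos : 0 < τ + u := by linarith
  have h := aux_sin_mul_le (l := (τ - u)/(τ + u)) (x := τ + u)
    (div_nonneg (by linarith) hpos.le) (by rw [div_le_one hpos]; linarith) (by linarith)
    (by nlinarith [Real.pi_gt_three])
  rw [div_mul_cancel₀ _ hpos.ne'] at h
  have h2 : (τ - u) * Real.sin (τ + u) ≤ (τ + u) * Real.sin (τ - u) := by
    rw [div_mul_eq_mul_div, div_le_iff₀ hpos] at h
    linarith
  rw [Real.sin_add, Real.sin_sub] at h2
  nlinarith [h2]

/-- Key inequality (B): for `0 ≤ b ≤ 1`, `0 < τ < π/2`,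
`0 ≤ b sin τ (cos bτ + 2 cos τ) - 3 cos τ sin bτ`.
Proved by concavity in `b` with equality at `b = 0` and `b = 1`. -/
lemma aux_B_nonneg {b τ : ℝ} (hb0 : 0 ≤ b) (hb1 : b ≤ 1) (hτ0 : 0 < τ) (hτ2 : τ < π/2) :
    0 ≤ b * Real.sin τ * (Real.cos (b*τ) + 2*Real.cos τ) - 3*Real.cos τ * Real.sin (b*τ) := by
  set g : ℝ → ℝ := fun x =>
    x * Real.sin τ * (Real.cos (x*τ) + 2*Real.cos τ) - 3*Real.cos τ * Real.sin (x*τ) with hg_def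
  set g' : ℝ → ℝ := fun x =>
    Real.sin τ * (Real.cos (x*τ) + 2*Real.cos τ) + x * Real.sin τ * (-Real.sin (x*τ)*τ)
      - 3*Real.cos τ * (Real.cos (x*τ)*τ) with hg'_def
  set g'' : ℝ → ℝ := fun x =>
    Real.sin τ * (-Real.sin (x*τ)*τ)
      + (Real.sin τ * (-Real.sin (x*τ)*τ) + x * Real.sin τ * (-(Real.cos (x*τ)*τ)*τ))
      - 3*Real.cos τ * (-Real.sin (x*τ)*τ*τ) with hg''_def
  have hg : ∀ x : ℝ, HasDerivAt g (g' x) x := by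
    intro x
    have hxt : HasDerivAt (fun y : ℝ => y*τ) τ x := hasDerivAt_mul_const τ
    have h1 : HasDerivAt (fun y : ℝ => y * Real.sin τ) (Real.sin τ) x :=
      hasDerivAt_mul_const (Real.sin τ)
    have h2 : HasDerivAt (fun y : ℝ => Real.cos (y*τ) + 2*Real.cos τ)
        (-Real.sin (x*τ)*τ) x := (hxt.cos).add_const _
    have h3 : HasDerivAt (fun y : ℝ => Real.sin (y*τ)) (Real.cos (x*τ)*τ) x := hxt.sin
    exact (h1.mul h2).sub (h3.const_mul (3*Real.cos τ))
  have hg' : ∀ x : ℝ, HasDerivAt g' (g'' x) x := by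
    intro x
    have hxt : HasDerivAt (fun y : ℝ => y*τ) τ x := hasDerivAt_mul_const τ
    have h1 : HasDerivAt (fun y : ℝ => y * Real.sin τ) (Real.sin τ) x :=
      hasDerivAt_mul_const (Real.sin τ)
    have t1 : HasDerivAt (fun y : ℝ => Real.sin τ * (Real.cos (y*τ) + 2*Real.cos τ))
        (Real.sin τ * (-Real.sin (x*τ)*τ)) x :=
      ((hxt.cos).add_const _).const_mul (Real.sin τ)
    have h4 : HasDerivAt (fun y : ℝ => -Real.sin (y*τ)*τ) (-(Real.cos (x*τ)*τ)*τ) x :=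
      (hxt.sin.neg).mul_const τ
    have t2 : HasDerivAt (fun y : ℝ => y * Real.sin τ * (-Real.sin (y*τ)*τ))
        (Real.sin τ * (-Real.sin (x*τ)*τ) + x * Real.sin τ * (-(Real.cos (x*τ)*τ)*τ)) x :=
      h1.mul h4
    have t3 : HasDerivAt (fun y : ℝ => 3*Real.cos τ * (Real.cos (y*τ)*τ))
        (3*Real.cos τ * (-Real.sin (x*τ)*τ*τ)) x := by
      exact ((hxt.cos).mul_const τ).const_mul (3*Real.cos τ)
    exact (t1.add t2).sub t3
  have hconc : ConcaveOn ℝ (Set.Icc (0:ℝ) 1) g := by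
    apply concaveOn_of_hasDerivWithinAt2_nonpos (convex_Icc 0 1)
      (fun x _ => ((hg x).differentiableAt).continuousAt.continuousWithinAt)
      (fun x _ => (hg x).hasDerivWithinAt)
      (fun x _ => (hg' x).hasDerivWithinAt)
    intro x hx
    rw [interior_Icc] at hx
    obtain ⟨hx0, hx1⟩ := hx
    have hu0 : 0 < x*τ := by positivity
    have huτ : x*τ ≤ τ := by nlinarith
    have hS : 0 < Real.sin (x*τ) :=
      Real.sin_pos_of_pos_of_lt_pi hu0 (by nlinarith [Real.pi_gt_three])
    have hL1 : τ * Real.cos τ < Real.sin τ := aux_tau_cos_lt_sin hτ0 hτ2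
    have hL2 : τ * Real.cos τ * Real.sin (x*τ) ≤ (x*τ) * Real.sin τ * Real.cos (x*τ) :=
      aux_tan_mono hu0 huτ hτ2
    have hA : τ * (τ * Real.cos τ * Real.sin (x*τ)) ≤ τ * ((x*τ) * Real.sin τ * Real.cos (x*τ)) :=
      mul_le_mul_of_nonneg_left hL2 hτ0.le
    have hB : (τ * Real.cos τ) * Real.sin (x*τ) ≤ Real.sin τ * Real.sin (x*τ) :=
      mul_le_mul_of_nonneg_right hL1.le hS.le
    simp only [hg''_def]
    nlinarith [hA, hB, hτ0]
  have hg0 : g 0 = 0 := by simp [hg_def]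
  have hg1 : g 1 = 0 := by simp [hg_def]; ring
  have key := hconc.2 (x := 0) (y := 1)
    (by constructor <;> norm_num) (by constructor <;> norm_num)
    (by linarith : (0:ℝ) ≤ 1 - b) hb0 (by ring)
  rw [hg0, hg1] at key
  simp only [smul_eq_mul, mul_zero, add_zero, mul_one, mul_zero, zero_add] at key
  simpa [hg_def] using key

/-- Positivity of the central quantity `H`. -/
lemma aux_H_pos {b τ : ℝ} (hb0 : 0 < b) (hb1 : b < 1) (hτ0 : 0 < τ) (hτ2 : τ < π/2) :
    0 < b * Real.sin τ * Real.sin (b*τ) * Real.cos (b*τ)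
      - 2*Real.cos τ * Real.sin (b*τ)^2 + b^2 * Real.sin τ^2 * Real.cos τ := by
  have hc : 0 < Real.cos τ := Real.cos_pos_of_mem_Ioo ⟨by linarith, hτ2⟩
  have hu0 : 0 < b*τ := by positivity
  have hS : 0 < Real.sin (b*τ) := by
    apply Real.sin_pos_of_pos_of_lt_pi hu0
    nlinarith [Real.pi_gt_three]
  have hBe := aux_B_nonneg hb0.le hb1.le hτ0 hτ2
  have hstrict : b * Real.sin τ < Real.sin (b*τ) :=
    aux_sin_mul_lt hb0 hb1 hτ0 (by nlinarith [Real.pi_gt_three])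
  have hsq : 0 < (Real.sin (b*τ) - b * Real.sin τ)^2 :=
    pow_pos (sub_pos.mpr hstrict) 2
  have key : b * Real.sin τ * Real.sin (b*τ) * Real.cos (b*τ)
      - 2*Real.cos τ * Real.sin (b*τ)^2 + b^2 * Real.sin τ^2 * Real.cos τ
      = Real.cos τ * (Real.sin (b*τ) - b * Real.sin τ)^2
        + Real.sin (b*τ) * (b * Real.sin τ * (Real.cos (b*τ) + 2*Real.cos τ)
            - 3*Real.cos τ * Real.sin (b*τ)) := by ring
  rw [key]
  have h1 : 0 < Real.cos τ * (Real.sin (b*τ) - b * Real.sin τ)^2 := mul_pos hc hsq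
  have h2 : 0 ≤ Real.sin (b*τ) * (b * Real.sin τ * (Real.cos (b*τ) + 2*Real.cos τ)
      - 3*Real.cos τ * Real.sin (b*τ)) := mul_nonneg hS.le hBe
  linarith

/-! ### Derivatives -/

lemma hasDerivAt_Uhat (α τ : ℝ) : HasDerivAt (Uhat α)
    ((1/α) * (2 * (Real.cos (2*(1 - α)*τ) * (2*(1 - α))) - 2*(1 - α) * (Real.cos (2*τ) * 2))) τ := by
  have h2b : HasDerivAt (fun t : ℝ => 2*(1 - α)*t) (2*(1 - α)) τ := by
    simpa using (hasDerivAt_id τ).const_mul (2*(1 - α))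
  have h2t : HasDerivAt (fun t : ℝ => 2*t) (2:ℝ) τ := by
    simpa using (hasDerivAt_id τ).const_mul (2:ℝ)
  exact ((h2b.sin.const_mul 2).sub (h2t.sin.const_mul (2*(1 - α)))).const_mul (1/α)

lemma hasDerivAt_Vhat (α τ : ℝ) : HasDerivAt (Vhat α)
    ((1/α) * ((1 + α) * (Real.cos ((1 - α)*τ) * (1 - α))
      - (1 - α) * (Real.cos ((1 + α)*τ) * (1 + α)))) τ := by
  have hb : HasDerivAt (fun t : ℝ => (1 - α)*t) (1 - α) τ := by
    simpa using (hasDerivAt_id τ).const_mul (1 - α)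
  have hp : HasDerivAt (fun t : ℝ => (1 + α)*t) (1 + α) τ := by
    simpa using (hasDerivAt_id τ).const_mul (1 + α)
  exact ((hb.sin.const_mul (1 + α)).sub (hp.sin.const_mul (1 - α))).const_mul (1/α)

lemma hasDerivAt_What (α τ : ℝ) : HasDerivAt (What α)
    ((1/α) * ((3 - α) * (Real.cos ((1 - α)*τ) * (1 - α))
      - (1 - α) * (Real.cos ((3 - α)*τ) * (3 - α)))) τ := by
  have hb : HasDerivAt (fun t : ℝ => (1 - α)*t) (1 - α) τ := by
    simpa using (hasDerivAt_id τ).const_mul (1 - α)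
  have h3 : HasDerivAt (fun t : ℝ => (3 - α)*t) (3 - α) τ := by
    simpa using (hasDerivAt_id τ).const_mul (3 - α)
  exact ((hb.sin.const_mul (3 - α)).sub (h3.sin.const_mul (1 - α))).const_mul (1/α)

theorem wronskian_signs (α : ℝ) (hα : α ∈ Set.Ioc (0 : ℝ) (1/2))
    (τ : ℝ) (hτ : τ ∈ Set.Ioo 0 (π/2)) :
    deriv (Uhat α) τ * What α τ - Uhat α τ * deriv (What α) τ > 0 ∧
    deriv (Vhat α) τ * What α τ - Vhat α τ * deriv (What α) τ > 0 ∧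
    (deriv (Vhat α) τ + deriv (What α) τ) * Uhat α τ
      - (Vhat α τ + What α τ) * deriv (Uhat α) τ < 0 := by
  obtain ⟨hα0, hα2⟩ := hα
  obtain ⟨hτ0, hτ2⟩ := hτ
  set s := Real.sin τ with hs_def
  set c := Real.cos τ with hc_def
  set S := Real.sin ((1 - α)*τ) with hS_def
  set C := Real.cos ((1 - α)*τ) with hC_def
  have hs : s^2 + c^2 = 1 := Real.sin_sq_add_cos_sq τ
  have hS2 : S^2 + C^2 = 1 := Real.sin_sq_add_cos_sq ((1 - α)*τ)
  -- trig expansions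
  have hA1 : Real.sin (2*(1 - α)*τ) = 2*S*C := by
    rw [show 2*(1 - α)*τ = 2*((1 - α)*τ) by ring, Real.sin_two_mul]
  have hA2 : Real.cos (2*(1 - α)*τ) = 2*C^2 - 1 := by
    rw [show 2*(1 - α)*τ = 2*((1 - α)*τ) by ring, Real.cos_two_mul]
  have hA3 : Real.sin (2*τ) = 2*s*c := Real.sin_two_mul τ
  have hA4 : Real.cos (2*τ) = 2*c^2 - 1 := Real.cos_two_mul τ
  have hA5 : Real.sin ((1 + α)*τ) = 2*s*c*C - (2*c^2 - 1)*S := by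
    rw [show (1 + α)*τ = 2*τ - (1 - α)*τ by ring, Real.sin_sub, hA3, hA4]
  have hA6 : Real.cos ((1 + α)*τ) = (2*c^2 - 1)*C + 2*s*c*S := by
    rw [show (1 + α)*τ = 2*τ - (1 - α)*τ by ring, Real.cos_sub, hA3, hA4]
  have hA7 : Real.sin ((3 - α)*τ) = 2*s*c*C + (2*c^2 - 1)*S := by
    rw [show (3 - α)*τ = 2*τ + (1 - α)*τ by ring, Real.sin_add, hA3, hA4]
  have hA8 : Real.cos ((3 - α)*τ) = (2*c^2 - 1)*C - 2*s*c*S := by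
    rw [show (3 - α)*τ = 2*τ + (1 - α)*τ by ring, Real.cos_add, hA3, hA4]
  -- positivity of basic quantities
  have hs0 : 0 < s := Real.sin_pos_of_pos_of_lt_pi hτ0 (by nlinarith [Real.pi_gt_three])
  have hc0 : 0 < c := Real.cos_pos_of_mem_Ioo ⟨by linarith, hτ2⟩
  have hb0 : 0 < 1 - α := by linarith
  have hb1 : (1:ℝ) - α < 1 := by linarith
  have hbτ0 : 0 < (1 - α)*τ := by positivity
  have hbτ2 : (1 - α)*τ < π/2 := by nlinarith
  have hS0 : 0 < S := Real.sin_pos_of_pos_of_lt_pi hbτ0 (by nlinarith [Real.pi_gt_three])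
  have hC0 : 0 < C := Real.cos_pos_of_mem_Ioo ⟨by linarith, hbτ2⟩
  -- the central quantity H
  have hH : 0 < (1 - α)*s*S*C - 2*c*S^2 + (1 - α)^2*s^2*c := by
    have := aux_H_pos hb0 hb1 hτ0 hτ2
    rw [← hs_def, ← hc_def, ← hS_def, ← hC_def] at this
    linarith
  have hinv : (0:ℝ) < (1/α)^2 := by positivity
  -- rewrite derivatives and definitions
  rw [(hasDerivAt_Uhat α τ).deriv, (hasDerivAt_Vhat α τ).deriv, (hasDerivAt_What α τ).deriv]
  simp only [Uhat, Vhat, What]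
  rw [hA1, hA2, hA3, hA4, hA5, hA6, hA7, hA8, ← hS_def, ← hC_def]
  refine ⟨?_, ?_, ?_⟩
  · have e1 : (1/α) * (2 * ((2*C^2 - 1) * (2*(1 - α))) - 2*(1 - α) * ((2*c^2 - 1) * 2)) *
        ((1/α) * ((3 - α) * S - (1 - α) * (2*s*c*C + (2*c^2 - 1)*S))) -
        (1/α) * (2 * (2*S*C) - 2*(1 - α) * (2*s*c)) *
        ((1/α) * ((3 - α) * (C * (1 - α)) - (1 - α) * (((2*c^2 - 1)*C - 2*s*c*S) * (3 - α)))) =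
        (1/α)^2 * (8*(1 - α)*(s*C + c*S) *
          ((1 - α)*s*S*C - 2*c*S^2 + (1 - α)^2*s^2*c)) := by
      linear_combination ((1/α)^2 * (-16*S + 16*S*α + 8*S*C^2 - 8*S*C^2*α^2 + 16*S^3 - 16*S^3*α
          + 16*c^2*S - 32*c^2*S*α + 16*c^2*S*α^2 - 8*s*c*C + 24*s*c*C*α - 24*s*c*C*α^2
          + 8*s*c*C*α^3)) * hs
        + ((1/α)^2 * (16*S - 16*S*α - 16*s*c*C + 32*s*c*C*α - 16*s*c*C*α^2 - 16*s^2*S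
          + 16*s^2*S*α)) * hS2
    rw [e1]
    have h3 : 0 < s*C + c*S := by positivity
    have h2 : 0 < 8*(1 - α) := by linarith
    exact mul_pos hinv (mul_pos (mul_pos h2 h3) hH)
  · have e2 : (1/α) * ((1 + α) * (C * (1 - α)) - (1 - α) * (((2*c^2 - 1)*C + 2*s*c*S) * (1 + α))) *
        ((1/α) * ((3 - α) * S - (1 - α) * (2*s*c*C + (2*c^2 - 1)*S))) -
        (1/α) * ((1 + α) * S - (1 - α) * (2*s*c*C - (2*c^2 - 1)*S)) *
        ((1/α) * ((3 - α) * (C * (1 - α)) - (1 - α) * (((2*c^2 - 1)*C - 2*s*c*S) * (3 - α)))) =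
        (1/α)^2 * (8*(1 - α)*s *
          ((1 - α)*s*S*C - 2*c*S^2 + (1 - α)^2*s^2*c)) := by
      linear_combination ((1/α)^2 * (-8*S*C + 16*S*C*α - 8*S*C*α^2 + 16*c^2*S*C - 32*c^2*S*C*α
          + 16*c^2*S*C*α^2 - 8*s*c*C^2 + 24*s*c*C^2*α - 24*s*c*C^2*α^2 + 8*s*c*C^2*α^3
          - 8*s*c*S^2 + 24*s*c*S^2*α - 24*s*c*S^2*α^2 + 8*s*c*S^2*α^3)) * hs
        + ((1/α)^2 * (8*s^3*c - 24*s^3*c*α + 24*s^3*c*α^2 - 8*s^3*c*α^3)) * hS2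
    rw [e2]
    have h2 : 0 < 8*(1 - α)*s := by positivity
    exact mul_pos hinv (mul_pos h2 hH)
  · have e3 : ((1/α) * ((1 + α) * (C * (1 - α)) - (1 - α) * (((2*c^2 - 1)*C + 2*s*c*S) * (1 + α))) +
        (1/α) * ((3 - α) * (C * (1 - α)) - (1 - α) * (((2*c^2 - 1)*C - 2*s*c*S) * (3 - α)))) *
        ((1/α) * (2 * (2*S*C) - 2*(1 - α) * (2*s*c))) -
        ((1/α) * ((1 + α) * S - (1 - α) * (2*s*c*C - (2*c^2 - 1)*S)) +
         (1/α) * ((3 - α) * S - (1 - α) * (2*s*c*C + (2*c^2 - 1)*S))) *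
        ((1/α) * (2 * ((2*C^2 - 1) * (2*(1 - α))) - 2*(1 - α) * ((2*c^2 - 1) * 2))) =
        -((1/α)^2 * (16*(1 - α)*(c*S) *
          ((1 - α)*s*S*C - 2*c*S^2 + (1 - α)^2*s^2*c))) := by
      linear_combination ((1/α)^2 * (32*S - 32*S*α - 32*S*C^2 + 32*S*C^2*α - 32*S^3 + 32*S^3*α)) * hs
        + ((1/α)^2 * (-32*S + 32*S*α + 32*s*c*C - 64*s*c*C*α + 32*s*c*C*α^2 + 32*s^2*S
          - 32*s^2*S*α)) * hS2
    rw [e3]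
    have h2 : 0 < 16*(1 - α)*(c*S) := by positivity
    have : 0 < (1/α)^2 * (16*(1 - α)*(c*S) *
        ((1 - α)*s*S*C - 2*c*S^2 + (1 - α)^2*s^2*c)) := mul_pos hinv (mul_pos h2 hH)
    linarith
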